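/- Let G be a connected finite simple graph on N vertices in which every vertex has degree at most Δ, and let R be a positive integer with N > Δ^{4R}+1. Let H be a Hamiltonian of range R with respect to G such that H |W⟩ = λ |W⟩ for some λ ∈ ℂ. Then there exist Ω, ω ∈ ℂ and, for each nonempty subset X ⊆ V with diam(X) ≤ 2R, an operator h_X supported on X satisfying h_X |W⟩ = 0 and h_X |0̄⟩ = 0, such that H = Ω·I + ω·N̂ + ∑_X h_X. -/

import Mathlib

open scoped BigOperators
set_option linter.unusedSectionVars false

noncomputable section

/-- The state space of a collection of qubits indexed by `V`: the complex vector space of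
functions from configurations `V → Bool` to `ℂ`. -/
abbrev QState (V : Type*) := (V → Bool) → ℂ

section Defs

variable {V : Type*} [Fintype V] [DecidableEq V]

/-- The standard basis vector associated to the configuration `f`. -/
def basisVec (f : V → Bool) : QState V := fun g => if g = f then 1 else 0

/-- The creation operator `s†_i` at site `i`. -/
def creOp (i : V) : Module.End ℂ (QState V) where
  toFun ψ := fun g => if g i = true then ψ (Function.update g i false) else 0
  map_add' ψ φ := by funext g; by_cases h : g i = true <;> simp [h]
  map_smul' a ψ := by funext g; by_cases h : g i = true <;> simp [h]

/-- The annihilation operator `s_i` at site `i`. -/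
def annOp (i : V) : Module.End ℂ (QState V) where
  toFun ψ := fun g => if g i = false then ψ (Function.update g i true) else 0
  map_add' ψ φ := by funext g; by_cases h : g i = false <;> simp [h]
  map_smul' a ψ := by funext g; by_cases h : g i = false <;> simp [h]

@[simp] lemma creOp_apply (i : V) (ψ : QState V) (g : V → Bool) :
    creOp i ψ g = if g i = true then ψ (Function.update g i false) else 0 := rfl

variable (V)

/-- The vacuum `|0̄⟩`: the basis vector of the all-false configuration. -/
def vac : QState V := basisVec (fun _ => false)

/-- The total raising operator `S† = ∑ i, s†_i`. -/
def Sdag : Module.End ℂ (QState V) := ∑ i : V, creOp i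

/-- The number operator `N̂ = ∑ i, s†_i s_i`. -/
def numOp : Module.End ℂ (QState V) := ∑ i : V, creOp i * annOp i

/-- The unnormalized Dicke state `|W^p⟩ = (S†)^p |0̄⟩`. -/
def WState (p : ℕ) : QState V := ((Sdag V) ^ p) (vac V)

variable {V}

/-- Creation operators at different sites commute. -/
lemma creOp_commute (i j : V) : Commute (creOp (V := V) i) (creOp j) := by
  rcases eq_or_ne i j with rfl | hij
  · exact Commute.refl _
  · show creOp i * creOp j = creOp j * creOp i
    refine LinearMap.ext fun ψ => funext fun g => ?_
    simp only [Module.End.mul_apply, creOp_apply]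
    by_cases hi : g i = true <;> by_cases hj : g j = true <;>
      simp [hi, hj, Function.update_of_ne hij, Function.update_of_ne hij.symm,
        Function.update_comm hij]

/-- The product `∏_{j ∈ Y} s†_j` of creation operators over a finite set `Y` of sites
(the operators commute, so the product is well defined; the empty product is the identity). -/
def creProd (Y : Finset V) : Module.End ℂ (QState V) :=
  Y.noncommProd creOp fun a _ b _ _ => creOp_commute a b

/-- The operator `O` is supported on the set of sites `X`. -/
def SupportedOn (O : Module.End ℂ (QState V)) (X : Set V) : Prop :=
  (∀ f g : V → Bool, (∃ i ∉ X, f i ≠ g i) → O (basisVec f) g = 0) ∧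
  (∀ f f' g g' : V → Bool,
    (∀ i ∈ X, f i = f' i) → (∀ i ∈ X, g i = g' i) →
    (∀ i ∉ X, f i = g i) → (∀ i ∉ X, f' i = g' i) →
    O (basisVec f) g = O (basisVec f') g')

/-- An operator is `k`-local if it is a finite sum of operators each supported
on a subset of at most `k` sites. -/
def IsKLocal (k : ℕ) (O : Module.End ℂ (QState V)) : Prop :=
  ∃ (n : ℕ) (h : Fin n → Module.End ℂ (QState V)) (X : Fin n → Finset V),
    (∀ t, SupportedOn (h t) ↑(X t)) ∧ (∀ t, (X t).card ≤ k) ∧ O = ∑ t, h t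

/-- Vertices `i` and `j` are within distance `r` in the graph `G`:
they are joined by a walk of length at most `r`. -/
def WithinDist (G : SimpleGraph V) (r : ℕ) (i j : V) : Prop :=
  ∃ w : G.Walk i j, w.length ≤ r

/-- The ball of radius `r` around vertex `i` in the graph `G`. -/
def gball (G : SimpleGraph V) (i : V) (r : ℕ) : Set V := {j | WithinDist G r i j}

/-- `diam(X) ≤ R` with respect to `G`: every two vertices of `X` are within distance `R - 1`. -/
def GDiamLE (G : SimpleGraph V) (X : Finset V) (R : ℕ) : Prop :=
  ∀ i ∈ X, ∀ j ∈ X, WithinDist G (R - 1) i j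

/-- `H` is a Hamiltonian of range `R` with respect to the graph `G`: a finite sum over
nonempty subsets `X` with `diam(X) ≤ R` of operators supported on `X`. -/
def IsRangeHam (G : SimpleGraph V) (R : ℕ) (H : Module.End ℂ (QState V)) : Prop :=
  ∃ h : Finset V → Module.End ℂ (QState V),
    (∀ X, SupportedOn (h X) ↑X) ∧
    (∀ X, h X ≠ 0 → X.Nonempty ∧ GDiamLE G X R) ∧
    H = ∑ X : Finset V, h X

/-- `H` is a `k`-local Hamiltonian of range `R` with respect to the graph `G`. -/
def IsKLocalRangeHam (G : SimpleGraph V) (k R : ℕ) (H : Module.End ℂ (QState V)) : Prop :=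
  ∃ h : Finset V → Module.End ℂ (QState V),
    (∀ X, SupportedOn (h X) ↑X) ∧
    (∀ X, h X ≠ 0 → X.Nonempty ∧ GDiamLE G X R ∧ X.card ≤ k) ∧
    H = ∑ X : Finset V, h X

/-- An invertible linear operator `M` is `δ`-locality-preserving with respect to `G` if
conjugation by `M` or `M⁻¹` increases the range of any operator by at most `δ`. -/
def LocalityPreserving (G : SimpleGraph V) (δ : ℕ) (M : QState V ≃ₗ[ℂ] QState V) : Prop :=
  ∀ R : ℕ, 0 < R → ∀ O : Module.End ℂ (QState V), IsRangeHam G R O →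
    IsRangeHam G (R + δ) (M.toLinearMap ∘ₗ O ∘ₗ M.symm.toLinearMap) ∧
    IsRangeHam G (R + δ) (M.symm.toLinearMap ∘ₗ O ∘ₗ M.toLinearMap)

end Defs

section Chain

/-- Distance between two sites of the open chain `{0, …, N-1}`. -/
def chainDist {N : ℕ} (i j : Fin N) : ℕ := ((i : ℤ) - (j : ℤ)).natAbs

/-- `diam(X) ≤ R` on the open chain: `diam(X) = 1 + max |i - j|`. -/
def ChainDiamLE {N : ℕ} (X : Finset (Fin N)) (R : ℕ) : Prop :=
  ∀ i ∈ X, ∀ j ∈ X, chainDist i j + 1 ≤ R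

/-- `H` is a Hamiltonian of range `R` on the open chain of `N` sites. -/
def IsChainRangeHam {N : ℕ} (R : ℕ) (H : Module.End ℂ (QState (Fin N))) : Prop :=
  ∃ h : Finset (Fin N) → Module.End ℂ (QState (Fin N)),
    (∀ X, SupportedOn (h X) ↑X) ∧
    (∀ X, h X ≠ 0 → X.Nonempty ∧ ChainDiamLE X R) ∧
    H = ∑ X : Finset (Fin N), h X

/-- `H` is a `k`-local Hamiltonian of range `R` on the open chain of `N` sites. -/
def IsChainKLocalRangeHam {N : ℕ} (k R : ℕ) (H : Module.End ℂ (QState (Fin N))) : Prop :=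
  ∃ h : Finset (Fin N) → Module.End ℂ (QState (Fin N)),
    (∀ X, SupportedOn (h X) ↑X) ∧
    (∀ X, h X ≠ 0 → X.Nonempty ∧ ChainDiamLE X R ∧ X.card ≤ k) ∧
    H = ∑ X : Finset (Fin N), h X

end Chain

end

/-!
Subtracting `Ω • 1 + ω • N̂` with `Ω = ⟨0̄|H|0̄⟩` and `ω = λ - Ω` leaves a range-`R` operator `K`
with `K |W⟩ = 0` and `⟨0̄|K|0̄⟩ = 0`. A ball of radius `2R - 2` holds fewer than half of the
vertices, so far from any cluster of sites there is room for one more excitation; evaluating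
`K |W⟩ = 0` on such configurations gives `K |0̄⟩ = 0`.

Now split `K` by the set `D` of sites that a matrix element `⟨g|K|f⟩` flips. For `D ≠ ∅` this
part lives in the ball of radius `R - 1` around any point of `D`; subtracting operators supported
in that ball that reproduce its action on `|W⟩` makes it kill both `|W⟩` and `|0̄⟩`. Because
`K |W⟩ = 0`, these corrections add up to `∑ⱼ νⱼ sⱼ` with `∑ⱼ νⱼ = 0`, which telescopes along
walks into two-site terms `s_u - s_v` on edges. The diagonal part, minus its one-body part,
splits into terms supported on the sets of the original decomposition.
-/

open Finset

noncomputable section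

section Configurations

variable {V : Type*}

def vacCfg : V → Bool := fun _ => false

@[simp] lemma vacCfg_apply (v : V) : vacCfg v = false := rfl

lemma eq_vacCfg_iff {p : V → Bool} : p = vacCfg ↔ ∀ v, p v = false := funext_iff

def diffCfg (g f : V → Bool) : V → Bool := fun v => xor (g v) (f v)

lemma diffCfg_apply_eq_true {g f : V → Bool} {v : V} : diffCfg g f v = true ↔ g v ≠ f v := by
  simp [diffCfg]

@[simp] lemma vacCfg_diffCfg (f : V → Bool) : diffCfg vacCfg f = f := by
  funext v; simp [diffCfg]

lemma diffCfg_eq_vacCfg_iff {g f : V → Bool} : diffCfg g f = vacCfg ↔ g = f := by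
  simp [diffCfg, funext_iff]

def excCfg [DecidableEq V] (i : V) : V → Bool := fun v => decide (v = i)

@[simp] lemma excCfg_apply [DecidableEq V] (i v : V) : excCfg i v = decide (v = i) := rfl

lemma excCfg_ne_vacCfg [DecidableEq V] (i : V) : excCfg i ≠ vacCfg := fun h => by
  simpa using congrFun h i

def occupied [Fintype V] (p : V → Bool) : Finset V := univ.filter (p · = true)

@[simp] lemma mem_occupied [Fintype V] {p : V → Bool} {v : V} :
    v ∈ occupied p ↔ p v = true := by
  simp [occupied]

lemma occupied_excCfg [Fintype V] [DecidableEq V] (i : V) : occupied (excCfg i) = {i} := by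
  ext; simp

/-- An occupied site of `p` (arbitrary if `p = vacCfg`). -/
def center [Nonempty V] (p : V → Bool) : V := Classical.epsilon (p · = true)

lemma center_spec [Nonempty V] {p : V → Bool} (hp : p ≠ vacCfg) : p (center p) = true := by
  obtain ⟨v, hv⟩ : ∃ v, p v = true := by simpa [eq_vacCfg_iff] using hp
  exact Classical.epsilon_spec (p := (p · = true)) ⟨v, hv⟩

lemma center_excCfg [Nonempty V] [DecidableEq V] (i : V) : center (excCfg i) = i := by
  simpa using center_spec (excCfg_ne_vacCfg i)

end Configurations

section Operators

variable {V : Type*} [Fintype V]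

lemma basisVec_eq_single (f : V → Bool) : basisVec f = Pi.single f 1 := by
  funext g; simp [basisVec, Pi.single_apply]

lemma ext_basisVec {A B : Module.End ℂ (QState V)}
    (h : ∀ f g, A (basisVec f) g = B (basisVec f) g) : A = B := by
  refine LinearMap.pi_ext' fun f => LinearMap.ext_ring ?_
  funext g
  simpa [basisVec_eq_single] using h f g

@[simp] lemma vac_apply_vacCfg : vac V vacCfg = 1 := if_pos rfl

lemma SupportedOn.apply_basisVec_eq {O : Module.End ℂ (QState V)} {X : Set V}
    (hO : SupportedOn O X) {f g f' g' : V → Bool}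
    (hf : ∀ v ∈ X, f v = f' v) (hg : ∀ v ∈ X, g v = g' v)
    (hout : ∀ v ∉ X, f v = g v ↔ f' v = g' v) :
    O (basisVec f) g = O (basisVec f') g' := by
  by_cases hdiff : ∃ v ∉ X, f v ≠ g v
  · obtain ⟨v, hv, hne⟩ := hdiff
    rw [hO.1 f g ⟨v, hv, hne⟩, hO.1 f' g' ⟨v, hv, fun h => hne ((hout v hv).2 h)⟩]
  · push Not at hdiff
    exact hO.2 f f' g g' hf hg hdiff fun v hv => (hout v hv).1 (hdiff v hv)

lemma SupportedOn.mono {O : Module.End ℂ (QState V)} {X Y : Set V} (hO : SupportedOn O X)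
    (hXY : X ⊆ Y) : SupportedOn O Y :=
  ⟨fun f g ⟨v, hv, hne⟩ => hO.1 f g ⟨v, fun h => hv (hXY h), hne⟩,
    fun _ _ _ _ hf hg hfg hfg' => hO.apply_basisVec_eq (fun v hv => hf v (hXY hv))
      (fun v hv => hg v (hXY hv)) fun v hv => by
        by_cases hvY : v ∈ Y
        · rw [hf v hvY, hg v hvY]
        · simp [hfg v hvY, hfg' v hvY]⟩

lemma supportedOn_one (X : Set V) : SupportedOn (1 : Module.End ℂ (QState V)) X := by
  refine ⟨fun f g ⟨v, _, hne⟩ => ?_, fun f f' g g' hf hg hfg hfg' => ?_⟩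
  · simp only [Module.End.one_apply, basisVec]
    exact if_neg fun h => hne (congrFun h v).symm
  · simp only [Module.End.one_apply, basisVec, funext_iff]
    congr 1
    refine propext (forall_congr' fun v => ?_)
    by_cases hv : v ∈ X
    · rw [hf v hv, hg v hv]
    · simp [hfg v hv, hfg' v hv]

def supportedOps (X : Set V) : Submodule ℂ (Module.End ℂ (QState V)) where
  carrier := {O | SupportedOn O X}
  zero_mem' := ⟨fun _ _ _ => rfl, fun _ _ _ _ _ _ _ _ => rfl⟩
  add_mem' {A B} hA hB := ⟨fun f g h => by simp [hA.1 f g h, hB.1 f g h],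
    fun f f' g g' hf hg hfg hfg' => by
      simp [hA.2 f f' g g' hf hg hfg hfg', hB.2 f f' g g' hf hg hfg hfg']⟩
  smul_mem' c {A} hA := ⟨fun f g h => by simp [hA.1 f g h],
    fun f f' g g' hf hg hfg hfg' => by simp [hA.2 f f' g g' hf hg hfg hfg']⟩

@[simp] lemma mem_supportedOps {O : Module.End ℂ (QState V)} {X : Set V} :
    O ∈ supportedOps X ↔ SupportedOn O X := Iff.rfl

variable [DecidableEq V]

omit [Fintype V] in
lemma annOp_apply (j : V) (ψ : QState V) (g : V → Bool) :
    annOp j ψ g = if g j = false then ψ (Function.update g j true) else 0 := rfl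

@[simp] lemma toLin'_apply_basisVec (M : Matrix (V → Bool) (V → Bool) ℂ) (f g : V → Bool) :
    Matrix.toLin' M (basisVec f) g = M g f := by
  simp [basisVec_eq_single]

lemma sum_smul_basisVec (ψ : QState V) : ∑ p, ψ p • basisVec p = ψ := by
  funext g; simp [basisVec, Finset.sum_apply]

lemma creOp_apply_vac (i : V) : creOp i (vac V) = basisVec (excCfg i) := by
  funext g
  by_cases hg : g i = true
  · simp only [creOp_apply, hg, if_true, vac, basisVec, funext_iff]
    congr 1
    refine propext ⟨fun h v => ?_, fun h v => ?_⟩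
    · by_cases hv : v = i
      · simp [hv, hg]
      · simpa [hv] using h v
    · by_cases hv : v = i <;> simp [hv, h v]
  · simp only [creOp_apply, hg, basisVec]
    exact (if_neg (by rintro rfl; simp at hg)).symm

lemma wState_one_eq : WState V 1 = ∑ i, basisVec (excCfg i) := by
  simp [WState, Sdag, LinearMap.sum_apply, creOp_apply_vac]

lemma apply_wState_one (O : Module.End ℂ (QState V)) (g : V → Bool) :
    O (WState V 1) g = ∑ i, O (basisVec (excCfg i)) g := by
  simp [wState_one_eq, Finset.sum_apply]

/-- The operator `|b|_S⟩⟨a|_S| ⊗ 1_{V ∖ S}`. -/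
def localOp (S : Finset V) (a b : V → Bool) : Module.End ℂ (QState V) :=
  Matrix.toLin' (Matrix.of fun g f =>
    if (∀ v ∈ S, f v = a v ∧ g v = b v) ∧ ∀ v ∉ S, g v = f v then 1 else 0)

@[simp] lemma localOp_apply_basisVec (S : Finset V) (a b f g : V → Bool) :
    localOp S a b (basisVec f) g =
      if (∀ v ∈ S, f v = a v ∧ g v = b v) ∧ ∀ v ∉ S, g v = f v then 1 else 0 := by
  simp [localOp]

lemma localOp_supportedOn (S : Finset V) (a b : V → Bool) : SupportedOn (localOp S a b) S := by
  refine ⟨fun f g ⟨v, hv, hne⟩ => ?_, fun f f' g g' hf hg hfg hfg' => ?_⟩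
  · simp only [localOp_apply_basisVec]
    exact if_neg fun h => hne (h.2 v hv).symm
  · simp only [localOp_apply_basisVec]
    congr 1
    refine propext (and_congr (forall₂_congr fun v hv => ?_) (forall₂_congr fun v hv => ?_))
    · rw [hf v hv, hg v hv]
    · simp [hfg v hv, hfg' v hv]

lemma localOp_apply_wState {S : Finset V} {c : V} (hc : c ∈ S) {b : V → Bool}
    (hb : ∀ v ∉ S, b v = false) : localOp S (excCfg c) b (WState V 1) = basisVec b := by
  funext g
  rw [apply_wState_one, Finset.sum_eq_single c]
  · simp only [localOp_apply_basisVec, basisVec, funext_iff, true_and]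
    congr 1
    refine propext ⟨fun h v => ?_, fun h => ⟨fun v _ => h v, fun v hv => ?_⟩⟩
    · by_cases hv : v ∈ S
      · exact h.1 v hv
      · rw [h.2 v hv, hb v hv]
        simp [show v ≠ c from fun hvc => hv (hvc ▸ hc)]
    · rw [h v, hb v hv]
      simp [show v ≠ c from fun hvc => hv (hvc ▸ hc)]
  · intro i _ hic
    simp only [localOp_apply_basisVec]
    refine if_neg fun h => ?_
    simpa [Ne.symm hic] using (h.1 c hc).1
  · simp

lemma localOp_apply_vac {S : Finset V} {c : V} (hc : c ∈ S) (b : V → Bool) :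
    localOp S (excCfg c) b (vac V) = 0 := by
  funext g
  simp only [vac, localOp_apply_basisVec, Pi.zero_apply]
  exact if_neg fun h => by simpa using (h.1 c hc).1

lemma annOp_eq_localOp (j : V) : annOp j = localOp {j} (excCfg j) vacCfg := by
  refine ext_basisVec fun f g => ?_
  simp only [annOp_apply, localOp_apply_basisVec, basisVec, Finset.mem_singleton, forall_eq,
    excCfg_apply, vacCfg_apply, decide_true, funext_iff]
  by_cases hg : g j = false
  · simp only [hg, if_true, and_true]
    congr 1
    refine propext ⟨fun h => ⟨?_, fun v hv => ?_⟩, fun h v => ?_⟩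
    · simpa using (h j).symm
    · simpa [Function.update_apply, hv] using h v
    · by_cases hv : v = j
      · simp [hv, h.1]
      · simp [hv, h.2 v hv]
  · simp [hg]

lemma creOp_mul_annOp (j : V) : creOp j * annOp j = localOp {j} (excCfg j) (excCfg j) := by
  refine ext_basisVec fun f g => ?_
  simp only [Module.End.mul_apply, creOp_apply, annOp_apply, localOp_apply_basisVec, basisVec,
    Finset.mem_singleton, forall_eq, excCfg_apply, decide_true, Function.update_self,
    Function.update_idem, if_true]
  by_cases hg : g j = true
  · have hupd : Function.update g j true = g := hg ▸ Function.update_eq_self j g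
    simp only [hg, hupd, if_true, and_true, funext_iff]
    congr 1
    refine propext ⟨fun h => ⟨(h j).symm.trans hg, fun v _ => h v⟩, fun h v => ?_⟩
    by_cases hv : v = j
    · rw [hv, hg, h.1]
    · exact h.2 v hv
  · simp [hg]

lemma creOp_mul_annOp_apply_basisVec (t : V) (f g : V → Bool) :
    (creOp t * annOp t) (basisVec f) g = if g = f ∧ f t = true then 1 else 0 := by
  rw [creOp_mul_annOp, localOp_apply_basisVec]
  congr 1
  refine propext ⟨fun h => ⟨funext fun v => ?_, by simpa using (h.1 t (mem_singleton_self t)).1⟩,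
    fun h => ⟨fun v hv => ?_, fun v _ => by rw [h.1]⟩⟩
  · by_cases hv : v = t
    · subst hv; simp [(h.1 v (mem_singleton_self v)).1, (h.1 v (mem_singleton_self v)).2]
    · exact h.2 v (by simpa using hv)
  · rw [mem_singleton.1 hv, h.1]; simp [h.2]

lemma annOp_apply_wState (j : V) : annOp j (WState V 1) = vac V := by
  rw [annOp_eq_localOp]
  exact localOp_apply_wState (mem_singleton_self j) fun _ _ => rfl

lemma annOp_apply_vac (j : V) : annOp j (vac V) = 0 := by
  rw [annOp_eq_localOp]
  exact localOp_apply_vac (mem_singleton_self j) _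

lemma annOp_supportedOn (j : V) : SupportedOn (annOp j) ({j} : Finset V) := by
  rw [annOp_eq_localOp]
  exact localOp_supportedOn _ _ _

lemma numOp_apply_wState : numOp V (WState V 1) = WState V 1 := by
  have h (i : V) : (creOp i * annOp i) (WState V 1) = basisVec (excCfg i) := by
    rw [creOp_mul_annOp]
    exact localOp_apply_wState (mem_singleton_self i) fun v hv => by simpa using hv
  simp only [numOp, LinearMap.sum_apply, h, ← wState_one_eq]

lemma numOp_apply_vac : numOp V (vac V) = 0 := by
  simp [numOp, creOp_mul_annOp, localOp_apply_vac]

end Operators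

section Graph

variable {V : Type*} {G : SimpleGraph V} {r s : ℕ} {x y z : V}

lemma WithinDist.refl (G : SimpleGraph V) (r : ℕ) (x : V) : WithinDist G r x x :=
  ⟨.nil, Nat.zero_le r⟩

lemma WithinDist.symm (h : WithinDist G r x y) : WithinDist G r y x :=
  let ⟨w, hw⟩ := h; ⟨w.reverse, by simpa using hw⟩

lemma WithinDist.mono (h : WithinDist G r x y) (hrs : r ≤ s) : WithinDist G s x y :=
  let ⟨w, hw⟩ := h; ⟨w, hw.trans hrs⟩

lemma WithinDist.trans (h : WithinDist G r x y) (h' : WithinDist G s y z) :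
    WithinDist G (r + s) x z :=
  let ⟨w, hw⟩ := h; let ⟨w', hw'⟩ := h'; ⟨w.append w', by simp; omega⟩

lemma WithinDist.of_adj (h : G.Adj x y) (hr : 1 ≤ r) : WithinDist G r x y :=
  ⟨h.toWalk, by simpa using hr⟩

lemma GDiamLE.mono {X : Finset V} (h : GDiamLE G X r) (hrs : r ≤ s) : GDiamLE G X s :=
  fun i hi j hj => (h i hi j hj).mono (Nat.sub_le_sub_right hrs 1)

lemma WithinDist.eq_or_exists_adj (h : WithinDist G (r + 1) x y) :
    y = x ∨ ∃ u, G.Adj x u ∧ WithinDist G r u y := by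
  obtain ⟨w, hw⟩ := h
  cases w with
  | nil => exact .inl rfl
  | cons hadj q => exact .inr ⟨_, hadj, q, by simpa using hw⟩

variable [Fintype V]

variable (G) in
def ball (x : V) (r : ℕ) : Finset V := by
  classical exact univ.filter (WithinDist G r x ·)

@[simp] lemma mem_ball : y ∈ ball G x r ↔ WithinDist G r x y := by
  classical simp [ball]

lemma gDiamLE_ball (x : V) (r : ℕ) : GDiamLE G (ball G x r) (2 * r + 1) :=
  fun i hi j hj => by simpa [two_mul] using (mem_ball.1 hi).symm.trans (mem_ball.1 hj)

lemma card_ball_lt_pow {Δ : ℕ} (hΔ : 2 ≤ Δ) (hdeg : ∀ v, (G.neighborSet v).ncard ≤ Δ) :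
    ∀ r x, #(ball G x r) < Δ ^ (r + 1) := by
  classical
  intro r
  induction r with
  | zero =>
    intro x
    have : ball G x 0 ⊆ {x} := fun y hy => by
      obtain ⟨w, hw⟩ := mem_ball.1 hy
      simp [(SimpleGraph.Walk.eq_of_length_eq_zero (Nat.le_zero.1 hw)).symm]
    have := card_le_card this
    rw [card_singleton] at this
    rw [zero_add, pow_one]
    omega
  | succ r ih =>
    intro x
    have hsub : ball G x (r + 1) ⊆ insert x ((G.neighborFinset x).biUnion (ball G · r)) :=
      fun y hy => by
        rcases (mem_ball.1 hy).eq_or_exists_adj with rfl | ⟨u, hu, huy⟩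
        · exact mem_insert_self _ _
        · exact mem_insert_of_mem (mem_biUnion.2 ⟨u, by simpa using hu, mem_ball.2 huy⟩)
    have hN : #(G.neighborFinset x) ≤ Δ := by
      rw [← Set.ncard_coe_finset, G.coe_neighborFinset]
      exact hdeg x
    obtain ⟨P, hP⟩ : ∃ P, Δ ^ (r + 1) = P + 1 := ⟨_, (Nat.succ_pred_eq_of_pos (by positivity)).symm⟩
    have hsum : ∑ u ∈ G.neighborFinset x, #(ball G u r) ≤ #(G.neighborFinset x) * P := by
      simpa only [smul_eq_mul] using sum_le_card_nsmul _ _ P fun u _ => by have := ih u; omega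
    calc #(ball G x (r + 1))
        ≤ #((G.neighborFinset x).biUnion (ball G · r)) + 1 :=
          (card_le_card hsub).trans (card_insert_le _ _)
      _ ≤ Δ * P + 1 := by
          gcongr
          exact card_biUnion_le.trans (hsum.trans (Nat.mul_le_mul_right _ hN))
      _ < Δ ^ (r + 1 + 1) := by rw [pow_succ, hP]; nlinarith

lemma two_mul_card_ball_lt {Δ : ℕ} (hΔ : 2 ≤ Δ) (hdeg : ∀ v, (G.neighborSet v).ncard ≤ Δ)
    (x : V) (r : ℕ) : 2 * #(ball G x r) < Δ ^ (r + 2) :=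
  calc 2 * #(ball G x r) < 2 * Δ ^ (r + 1) := by
        have := card_ball_lt_pow hΔ hdeg r x; omega
    _ ≤ Δ ^ (r + 2) := by rw [pow_succ _ (r + 1), mul_comm]; gcongr

lemma two_le_of_connected {Δ : ℕ} (hconn : G.Connected)
    (hdeg : ∀ v, (G.neighborSet v).ncard ≤ Δ) (hcard : Δ + 1 < Fintype.card V) : 2 ≤ Δ := by
  classical
  by_contra! hΔ
  have hsum : ∑ v, G.degree v ≤ ∑ _v : V, Δ := sum_le_sum fun v _ => by
    rw [← G.card_neighborFinset_eq_degree, ← Set.ncard_coe_finset, G.coe_neighborFinset]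
    exact hdeg v
  have hedges := hconn.card_vert_le_card_edgeSet_add_one
  rw [G.sum_degrees_eq_twice_card_edges, G.edgeFinset_card] at hsum
  simp only [Nat.card_eq_fintype_card, sum_const, card_univ, smul_eq_mul] at hsum hedges
  interval_cases Δ <;> omega

lemma exists_not_withinDist (h : #(ball G x r) < Fintype.card V) :
    ∃ y, ¬ WithinDist G r x y := by
  classical
  obtain ⟨y, hy⟩ : ((ball G x r)ᶜ).Nonempty := by rw [← card_pos, card_compl]; omega
  exact ⟨y, by simpa using hy⟩

lemma exists_pairwise_not_withinDist [Nonempty V]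
    (h : ∀ x, 2 * #(ball G x r) < Fintype.card V) :
    ∃ x y z, ¬ WithinDist G r x y ∧ ¬ WithinDist G r x z ∧ ¬ WithinDist G r y z := by
  classical
  obtain ⟨x⟩ := ‹Nonempty V›
  obtain ⟨y, hy⟩ := exists_not_withinDist (show #(ball G x r) < _ by have := h x; omega)
  obtain ⟨z, hz⟩ : ((ball G x r ∪ ball G y r)ᶜ).Nonempty := by
    rw [← card_pos, card_compl]
    have := (card_union_le (ball G x r) (ball G y r)).trans_lt
      (show _ < Fintype.card V by have := h x; have := h y; omega)
    omega
  simp only [mem_compl, mem_union, mem_ball, not_or] at hz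
  exact ⟨x, y, z, hy, hz.1, hz.2⟩

end Graph

lemma Submodule.mem_iSup_iff_exists_sum {R M ι : Type*} [Semiring R] [AddCommMonoid M]
    [Module R M] [Fintype ι] (p : ι → Submodule R M) (x : M) :
    x ∈ ⨆ i, p i ↔ ∃ h : ι → M, (∀ i, h i ∈ p i) ∧ ∑ i, h i = x := by
  refine ⟨fun hx => ?_, fun ⟨h, hp, hx⟩ => hx ▸ sum_mem fun i _ => mem_iSup_of_mem i (hp i)⟩
  have hu : ⨆ i ∈ (univ : Finset ι), p i = ⨆ i, p i := by simp only [mem_univ, iSup_pos]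
  obtain ⟨μ, hμ⟩ := (mem_iSup_finset_iff_exists_sum p x).1 (hu ▸ hx)
  exact ⟨fun i => μ i, fun i => (μ i).2, hμ⟩

section TermSubmodules

variable {V : Type*} [Fintype V] (G : SimpleGraph V)

open scoped Classical in
def rangeTerms (r : ℕ) (X : Finset V) : Submodule ℂ (Module.End ℂ (QState V)) :=
  if X.Nonempty ∧ GDiamLE G X r then supportedOps X else ⊥

variable {G}

lemma mem_rangeTerms {r : ℕ} {X : Finset V} {O : Module.End ℂ (QState V)} :
    O ∈ rangeTerms G r X ↔ SupportedOn O X ∧ (O ≠ 0 → X.Nonempty ∧ GDiamLE G X r) := by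
  unfold rangeTerms
  split_ifs with hX
  · simp [hX]
  · simp only [Submodule.mem_bot]
    refine ⟨fun h => ?_, fun h => not_not.1 fun hO => hX (h.2 hO)⟩
    subst h
    exact ⟨zero_mem (supportedOps (X : Set V)), fun h => (h rfl).elim⟩

lemma isRangeHam_iff {r : ℕ} {H : Module.End ℂ (QState V)} :
    IsRangeHam G r H ↔ H ∈ ⨆ X, rangeTerms G r X := by
  simp only [IsRangeHam, Submodule.mem_iSup_iff_exists_sum, mem_rangeTerms]
  exact exists_congr fun h => by rw [forall_and, and_assoc, eq_comm]

lemma mem_iSup_rangeTerms_of_supportedOn_singleton {r : ℕ} {x : V}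
    {O : Module.End ℂ (QState V)} (hO : SupportedOn O ({x} : Finset V)) :
    O ∈ ⨆ X, rangeTerms G r X :=
  Submodule.mem_iSup_of_mem {x} (mem_rangeTerms.2 ⟨hO, fun _ => ⟨singleton_nonempty x,
    fun i hi j hj => by rw [mem_singleton.1 hi, mem_singleton.1 hj]; exact .refl G _ x⟩⟩)

variable [DecidableEq V]

variable (V) in
def wVacKillers : Submodule ℂ (Module.End ℂ (QState V)) :=
  LinearMap.ker (LinearMap.applyₗ (WState V 1)) ⊓ LinearMap.ker (LinearMap.applyₗ (vac V))

@[simp] lemma mem_wVacKillers {O : Module.End ℂ (QState V)} :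
    O ∈ wVacKillers V ↔ O (WState V 1) = 0 ∧ O (vac V) = 0 := by
  simp [wVacKillers]

lemma numOp_mem_iSup_rangeTerms {r : ℕ} : numOp V ∈ ⨆ X, rangeTerms G r X :=
  sum_mem fun t _ => mem_iSup_rangeTerms_of_supportedOn_singleton
    (by rw [creOp_mul_annOp]; exact localOp_supportedOn _ _ _)

variable (G) in
def localKillers (r : ℕ) : Submodule ℂ (Module.End ℂ (QState V)) :=
  ⨆ X, rangeTerms G r X ⊓ wVacKillers V

end TermSubmodules

section Locality

variable {V : Type*} [Fintype V] [DecidableEq V] {G : SimpleGraph V} {R : ℕ}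
  {K : Module.End ℂ (QState V)} {k : Finset V → Module.End ℂ (QState V)}
  (hk : ∀ X, k X ∈ rangeTerms G R X) (hK : ∑ X, k X = K)
include hk hK

lemma apply_basisVec_eq_zero_of_far {f g : V → Bool} {u v : V} (hu : f u ≠ g u)
    (hv : f v ≠ g v) (huv : ¬ WithinDist G (R - 1) u v) : K (basisVec f) g = 0 := by
  rw [← hK]
  simp only [LinearMap.sum_apply, Finset.sum_apply]
  refine sum_eq_zero fun X _ => ?_
  obtain ⟨hsupp, hdiam⟩ := mem_rangeTerms.1 (hk X)
  by_cases hX : k X = 0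
  · simp [hX]
  by_cases huX : u ∈ X
  · by_cases hvX : v ∈ X
    · exact absurd ((hdiam hX).2 u huX v hvX) huv
    · exact hsupp.1 f g ⟨v, hvX, hv⟩
  · exact hsupp.1 f g ⟨u, huX, hu⟩

lemma apply_basisVec_eq_of_local {f g f' g' : V → Bool} (d : V) (hd : f d ≠ g d)
    (hf : ∀ v, WithinDist G (R - 1) d v → f v = f' v)
    (hg : ∀ v, WithinDist G (R - 1) d v → g v = g' v)
    (hfg : ∀ v, ¬ WithinDist G (R - 1) d v → f v = g v)
    (hfg' : ∀ v, ¬ WithinDist G (R - 1) d v → f' v = g' v) :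
    K (basisVec f) g = K (basisVec f') g' := by
  rw [← hK]
  simp only [LinearMap.sum_apply, Finset.sum_apply]
  refine sum_congr rfl fun X _ => ?_
  obtain ⟨hsupp, hdiam⟩ := mem_rangeTerms.1 (hk X)
  by_cases hX : k X = 0
  · simp [hX]
  by_cases hdX : d ∈ X
  · have hnear : ∀ v ∈ X, WithinDist G (R - 1) d v := (hdiam hX).2 d hdX
    refine hsupp.apply_basisVec_eq (fun v hv => hf v (hnear v hv))
      (fun v hv => hg v (hnear v hv)) fun v _ => ?_
    by_cases hv : WithinDist G (R - 1) d v
    · rw [hf v hv, hg v hv]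
    · simp [hfg v hv, hfg' v hv]
  · have hd' : f' d ≠ g' d := by
      rwa [← hf d (.refl G _ d), ← hg d (.refl G _ d)]
    rw [hsupp.1 f g ⟨d, hdX, hd⟩, hsupp.1 f' g' ⟨d, hdX, hd'⟩]

lemma apply_excCfg_update_eq_apply_vac {g : V → Bool} {d i : V} (hd : g d = true)
    (hg : ∀ v, g v = true → WithinDist G (R - 1) d v) (hi : ¬ WithinDist G (R - 1) d i) :
    K (basisVec (excCfg i)) (Function.update g i true) = K (vac V) g := by
  have hnear : ∀ v, WithinDist G (R - 1) d v → v ≠ i := fun v hv hvi => hi (hvi ▸ hv)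
  have hfar : ∀ v, ¬ WithinDist G (R - 1) d v → g v = false := fun v hv => by
    simpa using mt (hg v) hv
  refine apply_basisVec_eq_of_local hk hK d ?_ (fun v hv => ?_) (fun v hv => ?_)
    (fun v hv => ?_) (fun v hv => ?_)
  · simp [hnear d (.refl G _ d), hd]
  · simp [hnear v hv]
  · simp [hnear v hv]
  · by_cases hvi : v = i
    · simp [hvi]
    · simp [hvi, hfar v hv]
  · simp [hfar v hv]

variable (hKW : K (WState V 1) = 0)
include hKW

lemma apply_vac_excCfg_add_eq_zero {u v : V} (huv : ¬ WithinDist G (R - 1) u v) :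
    K (vac V) (excCfg u) + K (vac V) (excCfg v) = 0 := by
  have hne : u ≠ v := fun h => huv (h ▸ .refl G _ u)
  set p := Function.update (excCfg u) v true
  have hp : Function.update (excCfg v) u true = p := by
    funext w; by_cases hwu : w = u <;> by_cases hwv : w = v <;> simp_all [p]
  have hself (d : V) : ∀ w, excCfg d w = true → WithinDist G (R - 1) d w := fun w hw => by
    obtain rfl : w = d := of_decide_eq_true hw
    exact .refl G _ w
  have hpu : K (basisVec (excCfg u)) p = K (vac V) (excCfg v) :=
    hp ▸ apply_excCfg_update_eq_apply_vac hk hK (by simp) (hself v) fun h => huv h.symm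
  have hpv : K (basisVec (excCfg v)) p = K (vac V) (excCfg u) :=
    apply_excCfg_update_eq_apply_vac hk hK (by simp) (hself u) huv
  have h0 := congrFun hKW p
  rw [apply_wState_one, Fintype.sum_eq_add u v hne fun j hj =>
    apply_basisVec_eq_zero_of_far hk hK (u := u) (v := v) (by simp [p, hj.1.symm, hne])
      (by simp [p, hj.2.symm]) huv, hpu, hpv] at h0
  simpa [add_comm] using h0

lemma apply_vac_excCfg_eq_zero
    (htriple : ∃ x y z, ¬ WithinDist G (R - 1 + (R - 1)) x y ∧
      ¬ WithinDist G (R - 1 + (R - 1)) x z ∧ ¬ WithinDist G (R - 1 + (R - 1)) y z)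
    (w : V) : K (vac V) (excCfg w) = 0 := by
  -- the amplitudes of far pairs cancel; on a far triangle they all vanish, and every `w` is
  -- far from `x` or from `y`
  obtain ⟨x, y, z, hxy, hxz, hyz⟩ := htriple
  have hpair {a b : V} (h : ¬ WithinDist G (R - 1 + (R - 1)) a b) :=
    apply_vac_excCfg_add_eq_zero hk hK hKW fun h' => h (h'.mono (Nat.le_add_right _ _))
  have hx : K (vac V) (excCfg x) = 0 := by
    linear_combination (hpair hxy + hpair hxz - hpair hyz) / 2
  have hy : K (vac V) (excCfg y) = 0 := by linear_combination hpair hxy - hx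
  by_cases hwx : WithinDist G (R - 1) w x
  · by_cases hwy : WithinDist G (R - 1) w y
    · exact absurd (hwx.symm.trans hwy) hxy
    · linear_combination apply_vac_excCfg_add_eq_zero hk hK hKW hwy - hy
  · linear_combination apply_vac_excCfg_add_eq_zero hk hK hKW hwx - hx

lemma apply_vac_eq_zero_of_cluster {g : V → Bool} {c u i : V} (hc : g c = true)
    (hu : g u = true) (huc : u ≠ c) (hg : ∀ v, g v = true → WithinDist G (R - 1) c v)
    (hi : ¬ WithinDist G (R - 1 + (R - 1)) c i) : K (vac V) g = 0 := by
  have hfar : ∀ s, g s = true → ¬ WithinDist G (R - 1) s i := fun s hs h =>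
    hi ((hg s hs).trans h)
  have h0 := congrFun hKW (Function.update g i true)
  rw [apply_wState_one, Fintype.sum_eq_single i fun j hji => ?_] at h0
  · rwa [apply_excCfg_update_eq_apply_vac hk hK hc hg (fun h => hfar c hc h)] at h0
  obtain ⟨s, hs, hsj⟩ : ∃ s, g s = true ∧ s ≠ j := by
    by_cases hjc : j = c
    · exact ⟨u, hu, hjc ▸ huc⟩
    · exact ⟨c, hc, Ne.symm hjc⟩
  have hsi : s ≠ i := fun h => hfar s hs (h ▸ .refl G _ s)
  exact apply_basisVec_eq_zero_of_far hk hK (u := s) (v := i) (by simp [hsj, hsi, hs])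
    (by simp [Ne.symm hji]) (hfar s hs)

lemma apply_vac_eq_zero (hK00 : K (vac V) vacCfg = 0)
    (hball : ∀ x, 2 * #(ball G x (R - 1 + (R - 1))) < Fintype.card V) : K (vac V) = 0 := by
  funext g
  by_cases hg0 : g = vacCfg
  · exact hg0 ▸ hK00
  obtain ⟨c, hc⟩ : ∃ c, g c = true := by simpa [eq_vacCfg_iff] using hg0
  have : Nonempty V := ⟨c⟩
  by_cases hcl : ∀ v, g v = true → WithinDist G (R - 1) c v
  · by_cases hmany : ∃ u, g u = true ∧ u ≠ c
    · obtain ⟨u, hu, huc⟩ := hmany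
      obtain ⟨i, hi⟩ := exists_not_withinDist (show #(ball G c (R - 1 + (R - 1))) < _ by
        have := hball c; omega)
      exact apply_vac_eq_zero_of_cluster hk hK hKW hc hu huc hcl hi
    · have hgc : g = excCfg c := funext fun v => by
        by_cases hv : v = c
        · simp [hv, hc]
        · simpa [hv] using fun h => hmany ⟨v, h, hv⟩
      rw [hgc]
      exact apply_vac_excCfg_eq_zero hk hK hKW (exists_pairwise_not_withinDist hball) c
  · push Not at hcl
    obtain ⟨v, hv, hcv⟩ := hcl
    exact apply_basisVec_eq_zero_of_far hk hK (u := c) (v := v) (by simp [hc]) (by simp [hv]) hcv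

end Locality

section Decomposition

variable {V : Type*} [Fintype V] [DecidableEq V] {G : SimpleGraph V} {R : ℕ}

def flipPart (K : Module.End ℂ (QState V)) (D : V → Bool) : Module.End ℂ (QState V) :=
  Matrix.toLin' (Matrix.of fun g f => if diffCfg g f = D then K (basisVec f) g else 0)

@[simp] lemma flipPart_apply_basisVec (K : Module.End ℂ (QState V)) (D f g : V → Bool) :
    flipPart K D (basisVec f) g = if diffCfg g f = D then K (basisVec f) g else 0 := by
  simp [flipPart]

lemma sum_flipPart (K : Module.End ℂ (QState V)) : ∑ D, flipPart K D = K :=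
  ext_basisVec fun f g => by simp [LinearMap.sum_apply, Finset.sum_apply]

lemma flipPart_apply_vac {K : Module.End ℂ (QState V)} (hK : K (vac V) = 0) (D : V → Bool) :
    flipPart K D (vac V) = 0 := by
  funext g
  change flipPart K D (basisVec vacCfg) g = 0
  rw [flipPart_apply_basisVec]
  split_ifs
  exacts [congrFun hK g, rfl]

/-- The diagonal of `O` minus its part affine in the occupation numbers; it vanishes on
configurations with at most one excitation. -/
def diagRemainder : Module.End ℂ (QState V) →ₗ[ℂ] Module.End ℂ (QState V) where
  toFun O := Matrix.toLin' (Matrix.diagonal fun g => O (basisVec g) g - O (vac V) vacCfg -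
    ∑ i, if g i = true then O (basisVec (excCfg i)) (excCfg i) - O (vac V) vacCfg else 0)
  map_add' A B := ext_basisVec fun f g => by
    simp only [toLin'_apply_basisVec, Matrix.diagonal_apply, LinearMap.add_apply, Pi.add_apply]
    split_ifs
    · simp only [add_sub_add_comm, ite_add_zero, sum_add_distrib]
    · simp
  map_smul' c A := ext_basisVec fun f g => by
    simp only [toLin'_apply_basisVec, Matrix.diagonal_apply, LinearMap.smul_apply, Pi.smul_apply,
      smul_eq_mul, RingHom.id_apply, ← mul_sub, ← mul_ite_zero, ← mul_sum]

@[simp] lemma diagRemainder_apply_basisVec (O : Module.End ℂ (QState V)) (f g : V → Bool) :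
    diagRemainder O (basisVec f) g = if g = f then O (basisVec g) g - O (vac V) vacCfg -
      ∑ i, if g i = true then O (basisVec (excCfg i)) (excCfg i) - O (vac V) vacCfg else 0
      else 0 := by
  simp [diagRemainder, Matrix.diagonal_apply]

lemma diagRemainder_supportedOn {O : Module.End ℂ (QState V)} {X : Finset V}
    (hO : SupportedOn O X) : SupportedOn (diagRemainder O) X := by
  have hone (i : V) (hi : i ∉ X) : O (basisVec (excCfg i)) (excCfg i) = O (vac V) vacCfg :=
    hO.apply_basisVec_eq (fun v hv => by simp [show v ≠ i from fun h => hi (h ▸ hv)])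
      (fun v hv => by simp [show v ≠ i from fun h => hi (h ▸ hv)]) fun _ _ => by simp
  refine ⟨fun f g ⟨v, _, hne⟩ => ?_, fun f f' g g' hf hg hfg hfg' => ?_⟩
  · rw [diagRemainder_apply_basisVec, if_neg fun h => hne (congrFun h v).symm]
  · have hgf : g = f ↔ g' = f' := by
      simp only [funext_iff]
      refine forall_congr' fun v => ?_
      by_cases hv : v ∈ (X : Set V)
      · rw [hf v hv, hg v hv]
      · simp [hfg v hv, hfg' v hv]
    by_cases h : g = f
    · obtain rfl := h
      obtain rfl := hgf.1 rfl
      simp only [diagRemainder_apply_basisVec, if_true]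
      rw [hO.2 _ _ _ _ hf hf (fun _ _ => rfl) fun _ _ => rfl]
      congr 1
      refine sum_congr rfl fun i _ => ?_
      by_cases hi : i ∈ X
      · rw [hf i hi]
      · simp [hone i hi]
    · rw [diagRemainder_apply_basisVec, diagRemainder_apply_basisVec, if_neg h, if_neg (mt hgf.2 h)]

lemma diagRemainder_apply_wState (O : Module.End ℂ (QState V)) :
    diagRemainder O (WState V 1) = 0 := by
  funext g
  rw [apply_wState_one]
  refine sum_eq_zero fun i _ => ?_
  rw [diagRemainder_apply_basisVec]
  split_ifs with h
  · subst h
    rw [Fintype.sum_eq_single i fun j hj => by simp [hj]]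
    simp [vac]
  · rfl

lemma diagRemainder_apply_vac (O : Module.End ℂ (QState V)) : diagRemainder O (vac V) = 0 := by
  funext g
  change diagRemainder O (basisVec vacCfg) g = 0
  rw [diagRemainder_apply_basisVec]
  split_ifs with h
  · subst h
    simp only [vacCfg_apply, Bool.false_eq_true, if_false, sum_const_zero, sub_zero]
    exact sub_self _
  · rfl

lemma annOp_sub_annOp_mem_localKillers (hR : 0 < R) {a b : V} (w : G.Walk a b) :
    annOp a - annOp b ∈ localKillers G (2 * R) := by
  induction w with
  | nil => simp
  | @cons u c d hadj _ ih =>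
    rw [← sub_add_sub_cancel _ (annOp c)]
    refine add_mem (Submodule.mem_iSup_of_mem {u, c} ⟨mem_rangeTerms.2 ⟨?_, fun _ =>
      ⟨insert_nonempty _ _, ?_⟩⟩, mem_wVacKillers.2 ⟨?_, ?_⟩⟩) ih
    · rw [← mem_supportedOps]
      exact sub_mem ((annOp_supportedOn u).mono (by simp)) ((annOp_supportedOn c).mono (by simp))
    · have hadj' : WithinDist G (2 * R - 1) u c := .of_adj hadj (by omega)
      intro i hi j hj
      simp only [mem_insert, mem_singleton] at hi hj
      rcases hi with rfl | rfl <;> rcases hj with rfl | rfl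
      exacts [.refl G _ _, hadj', hadj'.symm, .refl G _ _]
    · simp [annOp_apply_wState]
    · simp [annOp_apply_vac]

variable [Nonempty V] {K : Module.End ℂ (QState V)} {k : Finset V → Module.End ℂ (QState V)}

/-- `|p⟩⟨e_c|` on the occupied sites of `p`, for an occupied `c`; maps `|W⟩` to `|p⟩` if `p ≠ 0`. -/
def raiseTo (p : V → Bool) : Module.End ℂ (QState V) :=
  localOp (occupied p) (excCfg (center p)) p

lemma raiseTo_excCfg (t : V) : raiseTo (excCfg t) = creOp t * annOp t := by
  rw [raiseTo, occupied_excCfg, center_excCfg, creOp_mul_annOp]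

/-- An operator with the same action on `|W⟩` as `flipPart K D`. Apart from the `p = 0` term
the summands do not depend on `D`, so the sum over `D` collapses (`sum_correction`). -/
def correction (K : Module.End ℂ (QState V)) (D : V → Bool) : Module.End ℂ (QState V) :=
  ∑ p, flipPart K D (WState V 1) p • if p = vacCfg then annOp (center D) else raiseTo p

lemma correction_apply_wState (K : Module.End ℂ (QState V)) (D : V → Bool) :
    correction K D (WState V 1) = flipPart K D (WState V 1) := by
  conv_rhs => rw [← sum_smul_basisVec (flipPart K D (WState V 1))]
  refine (LinearMap.sum_apply _ _ _).trans (sum_congr rfl fun p _ => ?_)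
  rw [LinearMap.smul_apply]
  congr 1
  split_ifs with hp
  · rw [annOp_apply_wState, hp]; rfl
  · exact localOp_apply_wState (mem_occupied.2 (center_spec hp)) fun v hv => by simpa using hv

lemma correction_apply_vac (K : Module.End ℂ (QState V)) (D : V → Bool) :
    correction K D (vac V) = 0 := by
  refine (LinearMap.sum_apply _ _ _).trans (sum_eq_zero fun p _ => ?_)
  rw [LinearMap.smul_apply]
  split_ifs with hp
  · rw [annOp_apply_vac, smul_zero]
  · rw [raiseTo, localOp_apply_vac (mem_occupied.2 (center_spec hp)), smul_zero]

lemma sum_correction (hKW : K (WState V 1) = 0) :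
    ∑ D, correction K D = ∑ j, K (basisVec (excCfg j)) vacCfg • annOp j := by
  have hw (D : V → Bool) : flipPart K D (WState V 1) vacCfg =
      ∑ j, if excCfg j = D then K (basisVec (excCfg j)) vacCfg else 0 := by
    rw [apply_wState_one]
    simp
  have hKW' (p : V → Bool) : ∑ D, flipPart K D (WState V 1) p = 0 := by
    rw [← Finset.sum_apply, ← LinearMap.sum_apply, sum_flipPart, hKW, Pi.zero_apply]
  simp only [correction]
  rw [sum_comm, Fintype.sum_eq_single vacCfg fun p hp => by
    simp only [if_neg hp, ← sum_smul, hKW', zero_smul]]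
  simp only [if_true, hw, sum_smul, ite_smul, zero_smul]
  rw [sum_comm]
  simp [center_excCfg]

lemma correction_vacCfg (K : Module.End ℂ (QState V)) :
    correction K vacCfg = ∑ t, K (basisVec (excCfg t)) (excCfg t) • (creOp t * annOp t) := by
  have hw (p : V → Bool) : flipPart K vacCfg (WState V 1) p =
      ∑ t, if excCfg t = p then K (basisVec (excCfg t)) (excCfg t) else 0 := by
    rw [apply_wState_one]
    refine sum_congr rfl fun t _ => ?_
    simp only [flipPart_apply_basisVec, diffCfg_eq_vacCfg_iff]
    by_cases h : excCfg t = p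
    · simp [h]
    · simp [h, Ne.symm h]
  simp only [correction, hw, sum_smul, ite_smul, zero_smul]
  rw [sum_comm]
  simp [excCfg_ne_vacCfg, raiseTo_excCfg]

lemma flipPart_vacCfg_sub_correction (hK00 : K (vac V) vacCfg = 0) :
    flipPart K vacCfg - correction K vacCfg = diagRemainder K := by
  rw [correction_vacCfg]
  refine ext_basisVec fun f g => ?_
  simp only [LinearMap.sub_apply, Pi.sub_apply, flipPart_apply_basisVec, diffCfg_eq_vacCfg_iff,
    LinearMap.sum_apply, Finset.sum_apply, LinearMap.smul_apply, Pi.smul_apply,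
    creOp_mul_annOp_apply_basisVec, diagRemainder_apply_basisVec, hK00, smul_eq_mul, sub_zero]
  split_ifs with h
  · subst h
    simp
  · simp [h]

variable (hk : ∀ X, k X ∈ rangeTerms G R X) (hK : ∑ X, k X = K)
include hk hK

lemma flipPart_supportedOn {D : V → Bool} (hD : D ≠ vacCfg) :
    SupportedOn (flipPart K D) (ball G (center D) (R - 1)) := by
  have hc {f g : V → Bool} (h : diffCfg g f = D) : f (center D) ≠ g (center D) :=
    Ne.symm (diffCfg_apply_eq_true.1 (by rw [h]; exact center_spec hD))
  refine ⟨fun f g ⟨v, hv, hne⟩ => ?_, fun f f' g g' hf hg hfg hfg' => ?_⟩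
  · rw [flipPart_apply_basisVec]
    split_ifs with h
    · exact apply_basisVec_eq_zero_of_far hk hK (hc h) hne (by simpa using hv)
    · rfl
  · have hdiff : diffCfg g f = diffCfg g' f' := funext fun v => by
      by_cases hv : v ∈ (ball G (center D) (R - 1) : Set V)
      · simp [diffCfg, hf v hv, hg v hv]
      · simp [diffCfg, hfg v hv, hfg' v hv]
    simp only [flipPart_apply_basisVec, hdiff]
    split_ifs with h
    · exact apply_basisVec_eq_of_local hk hK (center D) (hc (hdiff ▸ h))
        (fun v hv => hf v (by simpa using hv)) (fun v hv => hg v (by simpa using hv))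
        (fun v hv => hfg v (by simpa using hv)) (fun v hv => hfg' v (by simpa using hv))
    · rfl

lemma withinDist_center_of_flipPart_apply_wState_ne_zero (hKvac : K (vac V) = 0)
    {D p : V → Bool} (hD : D ≠ vacCfg) (hp : flipPart K D (WState V 1) p ≠ 0) {v : V}
    (hv : p v = true) : WithinDist G (R - 1) (center D) v := by
  obtain ⟨i, hi⟩ : ∃ i, flipPart K D (basisVec (excCfg i)) p ≠ 0 := by
    by_contra! h
    exact hp (by rw [apply_wState_one]; simp only [h, sum_const_zero])
  rw [flipPart_apply_basisVec, ne_eq, ite_eq_right_iff, Classical.not_imp] at hi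
  obtain ⟨hDi, hKi⟩ := hi
  have hflip (w : V) : D w = true ↔ p w ≠ excCfg i w := by rw [← hDi, diffCfg_apply_eq_true]
  have hc := (hflip _).1 (center_spec hD)
  have hnear (w : V) (hw : p w ≠ excCfg i w) : WithinDist G (R - 1) (center D) w := by
    by_contra h
    exact hKi (apply_basisVec_eq_zero_of_far hk hK (Ne.symm hc) (Ne.symm hw) h)
  by_cases hvi : v = i
  · subst hvi
    by_contra hfar
    have hcv : center D ≠ v := fun h => hfar (h ▸ .refl G _ _)
    apply hKi
    have hp' : Function.update (Function.update p v false) v true = p := by simp [← hv]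
    rw [← hp', apply_excCfg_update_eq_apply_vac hk hK (d := center D) (by simpa [hcv] using hc)
      (fun w hw => hnear w ?_) hfar, hKvac, Pi.zero_apply]
    have hwv : w ≠ v := by rintro rfl; simp at hw
    simpa [hwv] using hw
  · exact hnear v (by simp [hv, hvi])

lemma correction_supportedOn (hKvac : K (vac V) = 0) {D : V → Bool} (hD : D ≠ vacCfg) :
    SupportedOn (correction K D) (ball G (center D) (R - 1)) := by
  rw [← mem_supportedOps]
  refine sum_mem fun p _ => ?_
  by_cases hw : flipPart K D (WState V 1) p = 0
  · simp [hw]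
  refine Submodule.smul_mem _ _ ?_
  split_ifs with hp
  · exact (annOp_supportedOn _).mono (by simpa using WithinDist.refl G _ _)
  · exact (localOp_supportedOn _ _ _).mono fun v hv => by
      simpa using withinDist_center_of_flipPart_apply_wState_ne_zero hk hK hKvac hD hw
        (mem_occupied.1 hv)

theorem mem_localKillers (hR : 0 < R) (hconn : G.Preconnected) (hKW : K (WState V 1) = 0)
    (hKvac : K (vac V) = 0) : K ∈ localKillers G (2 * R) := by
  obtain ⟨r₀⟩ := ‹Nonempty V›
  have hν : ∑ j, K (basisVec (excCfg j)) vacCfg = 0 := by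
    rw [← apply_wState_one, hKW, Pi.zero_apply]
  have hdecomp : K = ∑ D, (flipPart K D - correction K D) +
      ∑ j, K (basisVec (excCfg j)) vacCfg • (annOp j - annOp r₀) := by
    simp only [smul_sub, sum_sub_distrib, ← sum_smul, hν, zero_smul, sub_zero,
      ← sum_correction hKW, sub_add_cancel, sum_flipPart]
  rw [hdecomp, Fintype.sum_eq_add_sum_compl vacCfg]
  refine add_mem (add_mem ?_ (sum_mem fun D hD => ?_)) (sum_mem fun j _ => Submodule.smul_mem _ _
    (annOp_sub_annOp_mem_localKillers hR (hconn j r₀).some))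
  · rw [flipPart_vacCfg_sub_correction (congrFun hKvac vacCfg), ← hK, map_sum]
    refine sum_mem fun X _ => Submodule.mem_iSup_of_mem X ⟨mem_rangeTerms.2 ⟨?_, fun h => ?_⟩,
      mem_wVacKillers.2 ⟨diagRemainder_apply_wState _, diagRemainder_apply_vac _⟩⟩
    · exact diagRemainder_supportedOn (mem_rangeTerms.1 (hk X)).1
    · obtain ⟨hX, hdiam⟩ := (mem_rangeTerms.1 (hk X)).2 fun h' => h (by rw [h', map_zero])
      exact ⟨hX, hdiam.mono (by omega)⟩
  · have hD : D ≠ vacCfg := by simpa using hD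
    refine Submodule.mem_iSup_of_mem (ball G (center D) (R - 1)) ⟨mem_rangeTerms.2 ⟨?_, fun _ =>
      ⟨⟨center D, by simpa using WithinDist.refl G _ _⟩, (gDiamLE_ball _ _).mono (by omega)⟩⟩,
      mem_wVacKillers.2 ⟨?_, ?_⟩⟩
    · rw [← mem_supportedOps]
      exact sub_mem (flipPart_supportedOn hk hK hD) (correction_supportedOn hk hK hKvac hD)
    · rw [LinearMap.sub_apply, correction_apply_wState, sub_self]
    · rw [LinearMap.sub_apply, correction_apply_vac, flipPart_apply_vac hKvac, sub_self]

end Decomposition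

end

/-- Decomposition of a range-R parent Hamiltonian of the W state on a
connected graph of maximum degree Δ with N > Δ^{4R}+1 vertices. -/
theorem W_parent_decomposition_graph
    {V : Type*} [Fintype V] [DecidableEq V]
    (G : SimpleGraph V) (hconn : G.Connected)
    (Δ : ℕ) (hdeg : ∀ v : V, (G.neighborSet v).ncard ≤ Δ)
    (R : ℕ) (hR : 0 < R) (hbig : Δ ^ (4 * R) + 1 < Fintype.card V)
    (H : Module.End ℂ (QState V)) (lam : ℂ)
    (hH : IsRangeHam G R H)
    (hW : H (WState V 1) = lam • WState V 1) :
    ∃ (Ω ω : ℂ) (h : Finset V → Module.End ℂ (QState V)),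
      (∀ X, SupportedOn (h X) ↑X) ∧
      (∀ X, h X ≠ 0 → X.Nonempty ∧ GDiamLE G X (2 * R)) ∧
      (∀ X, h X (WState V 1) = 0 ∧ h X (vac V) = 0) ∧
      H = Ω • (1 : Module.End ℂ (QState V)) + ω • numOp V + ∑ X : Finset V, h X := by
  have : Nonempty V := Fintype.card_pos_iff.1 (by omega)
  have hΔ : 2 ≤ Δ := two_le_of_connected hconn hdeg (by
    have := Nat.le_self_pow (show 4 * R ≠ 0 by omega) Δ; omega)
  have hball (y : V) : 2 * #(ball G y (R - 1 + (R - 1))) < Fintype.card V :=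
    (two_mul_card_ball_lt hΔ hdeg y _).trans_le
      (Nat.pow_le_pow_right (by omega) (show R - 1 + (R - 1) + 2 ≤ 4 * R by omega)) |>.trans
      (by omega)
  set Ω := H (vac V) vacCfg
  set K := H - Ω • 1 - (lam - Ω) • numOp V with hK_def
  have hKrange : K ∈ ⨆ X, rangeTerms G R X :=
    sub_mem (sub_mem (isRangeHam_iff.1 hH) (Submodule.smul_mem _ _
      (mem_iSup_rangeTerms_of_supportedOn_singleton (x := Classical.arbitrary V)
        (supportedOn_one _))))
      (Submodule.smul_mem _ _ numOp_mem_iSup_rangeTerms)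
  obtain ⟨k, hk, hK⟩ := (Submodule.mem_iSup_iff_exists_sum _ K).1 hKrange
  have hKW : K (WState V 1) = 0 := by simp [K, hW, numOp_apply_wState, sub_smul]
  have hK00 : K (vac V) vacCfg = 0 := by simp [K, numOp_apply_vac, Ω]
  obtain ⟨h, hmem, hsum⟩ := (Submodule.mem_iSup_iff_exists_sum _ K).1
    (mem_localKillers hk hK hR hconn.preconnected hKW (apply_vac_eq_zero hk hK hKW hK00 hball))
  refine ⟨Ω, lam - Ω, h, fun X => (mem_rangeTerms.1 (hmem X).1).1,
    fun X => (mem_rangeTerms.1 (hmem X).1).2, fun X => mem_wVacKillers.1 (hmem X).2, ?_⟩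
  rw [hsum, hK_def]
  abel
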